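/- Let W_{ℝ₊}: ℝ₊² → [0,1] be a symmetric measurable kernel with W_{ℝ₊}(u,u) = 0 for all u, let t_N > 0 and W_{N}(u,v) = W_{ℝ₊}(u·t_N, v·t_N). Let u_1 ≤ … ≤ u_N be the order statistics of N i.i.d. Uniform[0,1] random variables, let p_{ij} = W_{N}(u_i,u_j), let edge variables e_{ij} = e_{ji} ∼ Bernoulli(p_{ij}) be conditionally independent for i < j given the u's (with e_{ii} ∼ Bernoulli(p_{ii})), and let W̄_N(u,v) = Σ_{i,j} e_{ij}·1{u ∈ I_i}·1{v ∈ I_j} and P̄_N(u,v) = Σ_{i,j} p_{ij}·1{u ∈ I_i}·1{v ∈ I_j}. Then E‖W̄_N − P̄_N‖_{L²([0,1]²)} ≤ √(L₁ − L₂²)/t_N, where L₁ = ∫_{[0,t_N]²} W_{ℝ₊}(u,v) du dv and L₂² = ∫_{[0,t_N]²} W_{ℝ₊}(u,v)² du dv. -/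

import Mathlib

open MeasureTheory Set ProbabilityTheory

noncomputable section

/-- The `i`-th cell of the equal-spaced partition of `[0,1]` into `m` pieces. -/
def cell (m : ℕ) (i : Fin m) : Set ℝ :=
  if (i : ℕ) = m - 1 then Set.Icc ((m - 1 : ℝ) / m) 1
  else Set.Ico ((i : ℝ) / m) (((i : ℝ) + 1) / m)

/-- Piecewise-constant interpolation of a vector. -/
def interp (m : ℕ) (x : Fin m → ℝ) : ℝ → ℝ :=
  fun u => ∑ i, x i * (cell m i).indicator (fun _ => (1 : ℝ)) u

/-- Induced graphon (step kernel) of a matrix. -/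
def interp2 (m : ℕ) (S : Fin m → Fin m → ℝ) : ℝ → ℝ → ℝ :=
  fun u v => ∑ i, ∑ j, S i j * (cell m i).indicator (fun _ => (1 : ℝ)) u *
    (cell m j).indicator (fun _ => (1 : ℝ)) v

/-- L² norm on [0,1]. -/
def l2 (f : ℝ → ℝ) : ℝ := Real.sqrt (∫ u in Set.Icc (0 : ℝ) 1, (f u) ^ 2)

/-- L² norm on [0,1]². -/
def kl2 (W : ℝ → ℝ → ℝ) : ℝ :=
  Real.sqrt (∫ q in (Set.Icc (0 : ℝ) 1) ×ˢ (Set.Icc (0 : ℝ) 1), (W q.1 q.2) ^ 2)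

/-- Graphon shift operator. -/
def shiftOp (W : ℝ → ℝ → ℝ) (X : ℝ → ℝ) : ℝ → ℝ :=
  fun v => ∫ u in Set.Icc (0 : ℝ) 1, W u v * X u

/-- Iterated graphon shift. -/
def shiftIter (W : ℝ → ℝ → ℝ) (X : ℝ → ℝ) : ℕ → ℝ → ℝ
  | 0 => X
  | k + 1 => shiftOp W (shiftIter W X k)

/-- Graphon convolutional filter with taps `h`. -/
def gfilter {K : ℕ} (h : Fin K → ℝ) (W : ℝ → ℝ → ℝ) (X : ℝ → ℝ) : ℝ → ℝ :=
  fun v => ∑ k, h k * shiftIter W X k v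

/-- Frequency response of a filter. -/
def freqResp {K : ℕ} (h : Fin K → ℝ) (lam : ℝ) : ℝ := ∑ k, h k * lam ^ (k : ℕ)

/-- Graph convolutional filter with taps `h`. -/
def mfilter {K n : ℕ} (h : Fin K → ℝ) (S : Matrix (Fin n) (Fin n) ℝ) (x : Fin n → ℝ) :
    Fin n → ℝ :=
  ∑ k, h k • (S ^ (k : ℕ)).mulVec x

/-- `lam` is a nonzero eigenvalue of the integral operator with kernel `W` on `L²[0,1]`. -/
def IsEig (W : ℝ → ℝ → ℝ) (lam : ℝ) : Prop :=
  lam ≠ 0 ∧ ∃ φ : ℝ → ℝ, MemLp φ 2 (volume.restrict (Set.Icc (0 : ℝ) 1)) ∧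
    ¬ (φ =ᵐ[volume.restrict (Set.Icc (0 : ℝ) 1)] 0) ∧
    (∀ᵐ v ∂(volume.restrict (Set.Icc (0 : ℝ) 1)), shiftOp W φ v = lam * φ v)

/-- `Δh(λ) = min_k max_i |h(λ_i) - k|` over the eigenvalues of `W`. -/
def deltaH {K : ℕ} (h : Fin K → ℝ) (W : ℝ → ℝ → ℝ) : ℝ :=
  ⨅ k : ℝ, ⨆ lam ∈ {l : ℝ | IsEig W l}, |freqResp h lam - k|

/-- Bernoulli law with parameter `p`, as a measure on `ℝ` supported on `{0,1}`. -/
def bernoulliReal (p : ℝ) : Measure ℝ :=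
  ENNReal.ofReal p • Measure.dirac 1 + ENNReal.ofReal (1 - p) • Measure.dirac 0

/-- Graphon (WNN) neural network features, layer by layer. -/
def wnn (σ : ℝ → ℝ) (W : ℝ → ℝ → ℝ) (K : ℕ) (Fdim : ℕ → ℕ)
    (H : ℕ → ℕ → ℕ → Fin K → ℝ) (X0 : ℕ → ℝ → ℝ) : ℕ → ℕ → ℝ → ℝ
  | 0, f => X0 f
  | l + 1, f => fun u =>
      σ (∑ g ∈ Finset.range (Fdim l), gfilter (H l g f) W (wnn σ W K Fdim H X0 l g) u)

/-- Graph convolutional network features, layer by layer. -/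
def gcn (σ : ℝ → ℝ) {n : ℕ} (S : Matrix (Fin n) (Fin n) ℝ) (K : ℕ) (Fdim : ℕ → ℕ)
    (H : ℕ → ℕ → ℕ → Fin K → ℝ) (x0 : ℕ → Fin n → ℝ) : ℕ → ℕ → Fin n → ℝ
  | 0, f => x0 f
  | l + 1, f => fun i =>
      σ ((∑ g ∈ Finset.range (Fdim l), mfilter (H l g f) S (gcn σ S K Fdim H x0 l g)) i)

/-- `u ω` is the increasing rearrangement (order statistics) of `(v i ω)_i`. -/
def SortedVersion {Ω : Type*} {N : ℕ} (u : Ω → Fin N → ℝ) (v : Fin N → Ω → ℝ) : Prop :=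
  ∀ ω, Monotone (u ω) ∧ ∃ σ : Equiv.Perm (Fin N), ∀ i, u ω i = v (σ i) ω

/-- The family `v` is i.i.d. uniform on `[0,1]`. -/
def IIDUniform {Ω : Type*} [MeasurableSpace Ω] {N : ℕ} (v : Fin N → Ω → ℝ)
    (μ : Measure Ω) : Prop :=
  (∀ i, Measurable (v i)) ∧ iIndepFun v μ ∧
    ∀ i, μ.map (v i) = volume.restrict (Set.Icc (0 : ℝ) 1)

/-- Given `ω₁` (the latent features), the edge variables `e i j ω₁ : Ω₂ → ℝ` are symmetric,
conditionally independent over pairs `i ≤ j`, with `e i j ω₁ ∼ Bernoulli (W (u ω₁ i) (u ω₁ j))`. -/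
def CondBernoulliAdj {Ω₁ Ω₂ : Type*} [MeasurableSpace Ω₂]
    (μ₂ : Measure Ω₂) {N : ℕ} (e : Fin N → Fin N → Ω₁ → Ω₂ → ℝ)
    (W : ℝ → ℝ → ℝ) (u : Ω₁ → Fin N → ℝ) : Prop :=
  (∀ i j ω₁, Measurable (e i j ω₁)) ∧
  (∀ i j ω₁, e i j ω₁ = e j i ω₁) ∧
  (∀ ω₁, iIndepFun
    (fun q : {q : Fin N × Fin N // q.1 ≤ q.2} => e q.1.1 q.1.2 ω₁) μ₂) ∧
  (∀ i j ω₁, μ₂.map (e i j ω₁) = bernoulliReal (W (u ω₁ i) (u ω₁ j)))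

/-- `L₁ = ∫_{[0,t]²} W`. -/
def L1 (Wk : ℝ → ℝ → ℝ) (t : ℝ) : ℝ :=
  ∫ q in Set.Icc (0 : ℝ) t ×ˢ Set.Icc (0 : ℝ) t, Wk q.1 q.2

/-- `L₂² = ∫_{[0,t]²} W²`. -/
def L2sq (Wk : ℝ → ℝ → ℝ) (t : ℝ) : ℝ :=
  ∫ q in Set.Icc (0 : ℝ) t ×ˢ Set.Icc (0 : ℝ) t, (Wk q.1 q.2) ^ 2

/-!
Conditionally on the latent positions, `W̄_N − P̄_N` is the step kernel of `(e_ij − p_ij)`, whose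
`L²` norm is `√(∑ (e_ij − p_ij)²) / N`. Jensen's inequality for `√` and the Bernoulli variance
`p (1 − p)` bound its conditional expectation by `√(∑ p_ij (1 − p_ij)) / N`. This sum does not
change when the order statistics are replaced by the unsorted i.i.d. samples, so a second Jensen
step leaves `N (N − 1)` off-diagonal terms, each equal to `∫_{[0,1]²} W_N (1 − W_N)` by
independence, and diagonal terms that vanish because `W(u,u) = 0`. Rescaling by `t_N` turns that
integral into `(L₁ − L₂²) / t_N²`.
-/

section Cells

variable {N : ℕ}

lemma measurableSet_cell (i : Fin N) : MeasurableSet (cell N i) := by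
  unfold cell; split <;> [exact measurableSet_Icc; exact measurableSet_Ico]

lemma cell_subset_Ico_of_lt {i : Fin N} (hi : (i : ℕ) < N - 1) :
    cell N i ⊆ Ico ((i : ℝ) / N) (((i : ℝ) + 1) / N) := by
  rw [cell, if_neg hi.ne]

lemma cell_subset_Icc (i : Fin N) : cell N i ⊆ Icc ((i : ℝ) / N) (((i : ℝ) + 1) / N) := by
  have hlast : (i : ℕ) = N - 1 → ((N : ℝ) - 1) = i ∧ ((i : ℝ) + 1) = N := fun h => by
    have : (i : ℕ) + 1 = N := by omega
    constructor <;> linarith [show ((i : ℕ) : ℝ) + 1 = N by exact_mod_cast this]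
  unfold cell; split_ifs with h
  · rw [(hlast h).1, (hlast h).2, div_self (by exact_mod_cast i.pos.ne')]
  · exact Ico_subset_Icc_self

lemma cell_subset_unitInterval (i : Fin N) : cell N i ⊆ Icc 0 1 := by
  refine (cell_subset_Icc i).trans (Icc_subset_Icc (by positivity) ?_)
  rw [div_le_one (by exact_mod_cast i.pos)]
  exact_mod_cast i.isLt

lemma pairwise_disjoint_cell : Pairwise (Function.onFun Disjoint (cell N)) := by
  refine (pairwise_disjoint_on _).mpr fun i j hij => Set.disjoint_left.mpr fun x hxi hxj => ?_
  have hupper := (cell_subset_Ico_of_lt (by omega : (i : ℕ) < N - 1) hxi).2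
  have hlower := (cell_subset_Icc j hxj).1
  have : ((i : ℝ) + 1) / N ≤ (j : ℝ) / N := by
    gcongr; exact_mod_cast hij
  linarith

lemma volume_cell (i : Fin N) : volume (cell N i) = ENNReal.ofReal (1 / N) := by
  have hN : (N : ℝ) ≠ 0 := by exact_mod_cast i.pos.ne'
  unfold cell; split
  · rw [Real.volume_Icc]; congr 1; field_simp; ring
  · rw [Real.volume_Ico]; congr 1; field_simp; ring

end Cells

section StepKernel

variable {N : ℕ}

lemma interp2_eq_sum_indicator (A : Fin N → Fin N → ℝ) (x y : ℝ) :
    interp2 N A x y = ∑ i, ∑ j, (cell N i ×ˢ cell N j).indicator (fun _ => A i j) (x, y) := by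
  simp only [interp2]
  refine Finset.sum_congr rfl fun i _ => Finset.sum_congr rfl fun j _ => ?_
  by_cases hx : x ∈ cell N i <;> by_cases hy : y ∈ cell N j <;> simp [hx, hy]

lemma interp2_sub (A B : Fin N → Fin N → ℝ) (x y : ℝ) :
    interp2 N A x y - interp2 N B x y = interp2 N (fun i j => A i j - B i j) x y := by
  simp only [interp2, ← Finset.sum_sub_distrib, sub_mul]

lemma interp2_of_mem_cell (A : Fin N → Fin N → ℝ) {x y : ℝ} {i j : Fin N}
    (hx : x ∈ cell N i) (hy : y ∈ cell N j) : interp2 N A x y = A i j := by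
  have hnot : ∀ {z k l}, z ∈ cell N k → l ≠ k → z ∉ cell N l := fun hz hlk hzl =>
    Set.disjoint_left.mp (pairwise_disjoint_cell hlk) hzl hz
  rw [interp2_eq_sum_indicator, Finset.sum_eq_single i, Finset.sum_eq_single j,
    indicator_of_mem (mk_mem_prod hx hy)]
  · exact fun l _ hl => indicator_of_notMem (fun h => hnot hy hl h.2) _
  · simp
  · exact fun k _ hk => Finset.sum_eq_zero fun l _ =>
      indicator_of_notMem (fun h => hnot hx hk h.1) _
  · simp

lemma interp2_of_notMem_cell (A : Fin N → Fin N → ℝ) {x y : ℝ}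
    (h : ∀ i j, (x, y) ∉ cell N i ×ˢ cell N j) : interp2 N A x y = 0 := by
  simp [interp2_eq_sum_indicator, indicator_of_notMem (h _ _)]

lemma interp2_sq (A : Fin N → Fin N → ℝ) (x y : ℝ) :
    interp2 N A x y ^ 2 = interp2 N (fun i j => A i j ^ 2) x y := by
  by_cases h : ∃ i j, (x, y) ∈ cell N i ×ˢ cell N j
  · obtain ⟨i, j, hx, hy⟩ := h
    rw [interp2_of_mem_cell A hx hy, interp2_of_mem_cell _ hx hy]
  · push Not at h
    rw [interp2_of_notMem_cell A h, interp2_of_notMem_cell _ h, sq, mul_zero]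

lemma setIntegral_interp2 (A : Fin N → Fin N → ℝ) :
    ∫ q in Icc (0 : ℝ) 1 ×ˢ Icc (0 : ℝ) 1, interp2 N A q.1 q.2 = (∑ i, ∑ j, A i j) / N ^ 2 := by
  have hcell : ∀ i j : Fin N, MeasurableSet (cell N i ×ˢ cell N j) := fun i j =>
    (measurableSet_cell i).prod (measurableSet_cell j)
  have hvol : ∀ i j : Fin N, volume.real (cell N i ×ˢ cell N j) = 1 / N ^ 2 := fun i j => by
    rw [measureReal_def, Measure.volume_eq_prod, Measure.prod_prod, volume_cell, volume_cell,
      ← ENNReal.ofReal_mul (by positivity), ENNReal.toReal_ofReal (by positivity)]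
    ring
  have : IsFiniteMeasure (volume.restrict (Icc (0 : ℝ) 1 ×ˢ Icc (0 : ℝ) 1)) :=
    isFiniteMeasure_restrict.mpr (isCompact_Icc.prod isCompact_Icc).measure_lt_top.ne
  have hint : ∀ i j : Fin N, Integrable ((cell N i ×ˢ cell N j).indicator (fun _ => A i j))
      (volume.restrict (Icc (0 : ℝ) 1 ×ˢ Icc (0 : ℝ) 1)) := fun i j =>
    (integrable_const _).indicator (hcell i j)
  simp_rw [interp2_eq_sum_indicator, Finset.sum_div]
  rw [integral_finsetSum _ fun i _ => integrable_finsetSum _ fun j _ => hint i j]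
  refine Finset.sum_congr rfl fun i _ => ?_
  rw [integral_finsetSum _ fun j _ => hint i j]
  refine Finset.sum_congr rfl fun j _ => ?_
  rw [integral_indicator_const _ (hcell i j), measureReal_restrict_apply (hcell i j),
    inter_eq_left.mpr (prod_mono (cell_subset_unitInterval i) (cell_subset_unitInterval j)),
    hvol, smul_eq_mul]
  ring

lemma kl2_interp2 (A : Fin N → Fin N → ℝ) :
    kl2 (interp2 N A) = √((∑ i, ∑ j, A i j ^ 2) / N ^ 2) := by
  simp_rw [kl2, interp2_sq, setIntegral_interp2]

end StepKernel

lemma integral_sqrt_le_sqrt_integral {α : Type*} [MeasurableSpace α] {μ : Measure α}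
    [IsProbabilityMeasure μ] {f : α → ℝ} (hf0 : ∀ᵐ x ∂μ, 0 ≤ f x) (hf : Integrable f μ) :
    ∫ x, √(f x) ∂μ ≤ √(∫ x, f x ∂μ) := by
  by_cases hsqrt : Integrable (fun x => √(f x)) μ
  · exact Real.strictConcaveOn_sqrt.concaveOn.le_map_integral
      Real.continuous_sqrt.continuousOn isClosed_Ici hf0 hf hsqrt
  · rw [integral_undef hsqrt]
    exact Real.sqrt_nonneg _

section Bernoulli

lemma integrable_bernoulliReal (f : ℝ → ℝ) (p : ℝ) : Integrable f (bernoulliReal p) :=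
  ((integrable_dirac (by simp)).smul_measure ENNReal.ofReal_ne_top).add_measure
    ((integrable_dirac (by simp)).smul_measure ENNReal.ofReal_ne_top)

lemma mem_Icc_of_isProbabilityMeasure_bernoulliReal {p : ℝ}
    (h : IsProbabilityMeasure (bernoulliReal p)) : p ∈ Icc (0 : ℝ) 1 := by
  have hmass := h.measure_univ
  simp only [bernoulliReal, Measure.add_apply, Measure.smul_apply, measure_univ, smul_eq_mul,
    mul_one] at hmass
  constructor <;> by_contra hp <;> push Not at hp
  · rw [ENNReal.ofReal_of_nonpos hp.le, zero_add, ENNReal.ofReal_eq_one] at hmass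
    linarith
  · rw [ENNReal.ofReal_of_nonpos (by linarith : 1 - p ≤ 0), add_zero,
      ENNReal.ofReal_eq_one] at hmass
    linarith

lemma integral_bernoulliReal {p : ℝ} (hp : p ∈ Icc (0 : ℝ) 1) (f : ℝ → ℝ) :
    ∫ x, f x ∂bernoulliReal p = p * f 1 + (1 - p) * f 0 := by
  rw [bernoulliReal, integral_add_measure
      ((integrable_dirac (by simp)).smul_measure ENNReal.ofReal_ne_top)
      ((integrable_dirac (by simp)).smul_measure ENNReal.ofReal_ne_top),
    integral_smul_measure, integral_smul_measure, integral_dirac, integral_dirac,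
    ENNReal.toReal_ofReal hp.1, ENNReal.toReal_ofReal (by linarith [hp.2]), smul_eq_mul,
    smul_eq_mul]

variable {Ω : Type*} [MeasurableSpace Ω] {μ : Measure Ω} {X : Ω → ℝ} {p : ℝ}

lemma mem_Icc_of_map_eq_bernoulliReal [IsProbabilityMeasure μ] (hX : AEMeasurable X μ)
    (hlaw : μ.map X = bernoulliReal p) : p ∈ Icc (0 : ℝ) 1 :=
  mem_Icc_of_isProbabilityMeasure_bernoulliReal (hlaw ▸ Measure.isProbabilityMeasure_map hX)

lemma integrable_sub_sq_of_map_eq_bernoulliReal (hX : AEMeasurable X μ)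
    (hlaw : μ.map X = bernoulliReal p) : Integrable (fun ω => (X ω - p) ^ 2) μ := by
  have hg : Measurable fun x : ℝ => (x - p) ^ 2 := by fun_prop
  exact (integrable_map_measure hg.aestronglyMeasurable hX).mp
    (hlaw ▸ integrable_bernoulliReal _ p)

lemma integral_sub_sq_of_map_eq_bernoulliReal [IsProbabilityMeasure μ] (hX : AEMeasurable X μ)
    (hlaw : μ.map X = bernoulliReal p) : ∫ ω, (X ω - p) ^ 2 ∂μ = p * (1 - p) := by
  have hg : Measurable fun x : ℝ => (x - p) ^ 2 := by fun_prop
  rw [← integral_map hX hg.aestronglyMeasurable, hlaw,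
    integral_bernoulliReal (mem_Icc_of_map_eq_bernoulliReal hX hlaw)]
  ring

end Bernoulli

lemma integral_kl2_interp2_sub_le {Ω : Type*} [MeasurableSpace Ω] {μ : Measure Ω}
    [IsProbabilityMeasure μ] {N : ℕ} {X : Fin N → Fin N → Ω → ℝ} {p : Fin N → Fin N → ℝ}
    (hX : ∀ i j, AEMeasurable (X i j) μ) (hlaw : ∀ i j, μ.map (X i j) = bernoulliReal (p i j)) :
    ∫ ω, kl2 (fun s t => interp2 N (fun i j => X i j ω) s t - interp2 N p s t) ∂μ ≤
      √((∑ i, ∑ j, p i j * (1 - p i j)) / N ^ 2) := by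
  have hint : ∀ i j, Integrable (fun ω => (X i j ω - p i j) ^ 2) μ := fun i j =>
    integrable_sub_sq_of_map_eq_bernoulliReal (hX i j) (hlaw i j)
  have hsum : Integrable (fun ω => ∑ i, ∑ j, (X i j ω - p i j) ^ 2) μ :=
    integrable_finsetSum _ fun i _ => integrable_finsetSum _ fun j _ => hint i j
  calc ∫ ω, kl2 (fun s t => interp2 N (fun i j => X i j ω) s t - interp2 N p s t) ∂μ
      = ∫ ω, √((∑ i, ∑ j, (X i j ω - p i j) ^ 2) / N ^ 2) ∂μ := by
        simp_rw [interp2_sub, kl2_interp2]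
    _ ≤ √(∫ ω, (∑ i, ∑ j, (X i j ω - p i j) ^ 2) / N ^ 2 ∂μ) :=
        integral_sqrt_le_sqrt_integral (ae_of_all _ fun ω => by positivity) (hsum.div_const _)
    _ = √((∑ i, ∑ j, p i j * (1 - p i j)) / N ^ 2) := by
        rw [integral_div, integral_finsetSum _ fun i _ => integrable_finsetSum _ fun j _ =>
          hint i j]
        simp_rw [integral_finsetSum _ fun j _ => hint _ j,
          integral_sub_sq_of_map_eq_bernoulliReal (hX _ _) (hlaw _ _)]

lemma SortedVersion.sum_sum_comp {Ω : Type*} {N : ℕ} {u : Ω → Fin N → ℝ}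
    {v : Fin N → Ω → ℝ} (h : SortedVersion u v) (f : ℝ → ℝ → ℝ) (ω : Ω) :
    ∑ i, ∑ j, f (u ω i) (u ω j) = ∑ i, ∑ j, f (v i ω) (v j ω) := by
  obtain ⟨-, σ, hσ⟩ := h ω
  exact Fintype.sum_equiv σ _ _ fun i => Fintype.sum_equiv σ _ _ fun j => by rw [hσ, hσ]

lemma ProbabilityTheory.IndepFun.integral_comp_prodMk {Ω α β : Type*} [MeasurableSpace Ω]
    [MeasurableSpace α] [MeasurableSpace β] {μ : Measure Ω} [IsFiniteMeasure μ]
    {X : Ω → α} {Y : Ω → β} (hXY : IndepFun X Y μ) (hX : Measurable X) (hY : Measurable Y)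
    {F : α × β → ℝ} (hF : AEStronglyMeasurable F ((μ.map X).prod (μ.map Y))) :
    ∫ ω, F (X ω, Y ω) ∂μ = ∫ q, F q ∂(μ.map X).prod (μ.map Y) := by
  rw [← hXY.map_prod_eq_prod_map_map hX.aemeasurable hY.aemeasurable] at hF ⊢
  exact (integral_map (hX.prodMk hY).aemeasurable hF).symm

lemma sum_sum_div_sq_mem_Icc {N : ℕ} {a : Fin N → Fin N → ℝ} (ha : ∀ i j, a i j ∈ Icc (0 : ℝ) 1) :
    (∑ i, ∑ j, a i j) / N ^ 2 ∈ Icc (0 : ℝ) 1 := by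
  refine ⟨div_nonneg (Finset.sum_nonneg fun i _ => Finset.sum_nonneg fun j _ => (ha i j).1)
    (by positivity), div_le_one_of_le₀ ?_ (by positivity)⟩
  calc ∑ i, ∑ j, a i j ≤ ∑ _i : Fin N, ∑ _j : Fin N, (1 : ℝ) :=
        Finset.sum_le_sum fun i _ => Finset.sum_le_sum fun j _ => (ha i j).2
    _ = N ^ 2 := by simp [sq]

namespace IIDUniform

variable {Ω : Type*} [MeasurableSpace Ω] {μ : Measure Ω} {N : ℕ} {v : Fin N → Ω → ℝ}

lemma ae_mem_Icc (hv : IIDUniform v μ) : ∀ᵐ ω ∂μ, ∀ i, v i ω ∈ Icc (0 : ℝ) 1 := by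
  rw [ae_all_iff]
  intro i
  refine ae_of_ae_map (hv.1 i).aemeasurable ?_
  rw [hv.2.2 i]
  exact ae_restrict_mem measurableSet_Icc

lemma measurable_sum_sum_div (hv : IIDUniform v μ) {G : ℝ × ℝ → ℝ} (hG : Measurable G) :
    Measurable fun ω => (∑ i, ∑ j, G (v i ω, v j ω)) / N ^ 2 :=
  Measurable.div_const (Finset.measurable_sum _ fun i _ => Finset.measurable_sum _ fun j _ =>
    hG.comp ((hv.1 i).prodMk (hv.1 j))) _

lemma ae_sum_sum_div_mem_Icc (hv : IIDUniform v μ) {G : ℝ × ℝ → ℝ}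
    (hG01 : ∀ q ∈ Icc (0 : ℝ) 1 ×ˢ Icc (0 : ℝ) 1, G q ∈ Icc (0 : ℝ) 1) :
    ∀ᵐ ω ∂μ, (∑ i, ∑ j, G (v i ω, v j ω)) / N ^ 2 ∈ Icc (0 : ℝ) 1 := by
  filter_upwards [hv.ae_mem_Icc] with ω hω
  exact sum_sum_div_sq_mem_Icc fun i j => hG01 _ ⟨hω i, hω j⟩

lemma integral_sum_sum_div_le [IsProbabilityMeasure μ] (hv : IIDUniform v μ)
    {G : ℝ × ℝ → ℝ} (hG : Measurable G)
    (hG01 : ∀ q ∈ Icc (0 : ℝ) 1 ×ˢ Icc (0 : ℝ) 1, G q ∈ Icc (0 : ℝ) 1)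
    (hGdiag : ∀ x ∈ Icc (0 : ℝ) 1, G (x, x) = 0) :
    ∫ ω, (∑ i, ∑ j, G (v i ω, v j ω)) / N ^ 2 ∂μ ≤ ∫ q in Icc (0 : ℝ) 1 ×ˢ Icc (0 : ℝ) 1, G q := by
  have hv01 := hv.ae_mem_Icc
  obtain ⟨hvm, hind, hlaw⟩ := hv
  have hint : ∀ i j, Integrable (fun ω => G (v i ω, v j ω)) μ := fun i j =>
    Integrable.of_mem_Icc 0 1 (hG.comp ((hvm i).prodMk (hvm j))).aemeasurable
      (by filter_upwards [hv01] with ω hω using hG01 _ ⟨hω i, hω j⟩)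
  have hD : 0 ≤ ∫ q in Icc (0 : ℝ) 1 ×ˢ Icc (0 : ℝ) 1, G q :=
    setIntegral_nonneg (measurableSet_Icc.prod measurableSet_Icc) fun q hq => (hG01 q hq).1
  have hterm : ∀ i j, ∫ ω, G (v i ω, v j ω) ∂μ ≤ ∫ q in Icc (0 : ℝ) 1 ×ˢ Icc (0 : ℝ) 1, G q := by
    intro i j
    rcases eq_or_ne i j with rfl | hij
    · rw [integral_eq_zero_of_ae (by filter_upwards [hv01] with ω hω using hGdiag _ (hω i))]
      exact hD
    · rw [(hind.indepFun hij).integral_comp_prodMk (hvm i) (hvm j) hG.aestronglyMeasurable,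
        hlaw i, hlaw j, Measure.prod_restrict, ← Measure.volume_eq_prod]
  rw [integral_div, integral_finsetSum _ fun i _ => integrable_finsetSum _ fun j _ => hint i j]
  simp_rw [integral_finsetSum _ fun j _ => hint _ j]
  refine div_le_of_le_mul₀ (by positivity) hD ?_
  calc ∑ i, ∑ j, ∫ ω, G (v i ω, v j ω) ∂μ
      ≤ ∑ _i : Fin N, ∑ _j : Fin N, ∫ q in Icc (0 : ℝ) 1 ×ˢ Icc (0 : ℝ) 1, G q :=
        Finset.sum_le_sum fun i _ => Finset.sum_le_sum fun j _ => hterm i j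
    _ = (∫ q in Icc (0 : ℝ) 1 ×ˢ Icc (0 : ℝ) 1, G q) * N ^ 2 := by
        simp only [Finset.sum_const, Finset.card_univ, Fintype.card_fin, nsmul_eq_mul]; ring

end IIDUniform

lemma setIntegral_unitSquare_comp_mul {t : ℝ} (ht : 0 < t) (g : ℝ × ℝ → ℝ) :
    ∫ q in Icc (0 : ℝ) 1 ×ˢ Icc (0 : ℝ) 1, g (q.1 * t, q.2 * t) =
      (∫ q in Icc (0 : ℝ) t ×ˢ Icc (0 : ℝ) t, g q) / t ^ 2 := by
  have hsmul : ∀ q : ℝ × ℝ, (q.1 * t, q.2 * t) = t • q := fun q => by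
    ext <;> simp [mul_comm]
  simp_rw [hsmul]
  rw [Measure.setIntegral_comp_smul_of_pos _ _ _ ht, smul_set_prod,
    LinearOrderedField.smul_Icc ht, Module.finrank_prod, Module.finrank_self, smul_eq_mul,
    mul_zero, mul_one, inv_mul_eq_div]

def varianceKernel (W : ℝ → ℝ → ℝ) (t : ℝ) (q : ℝ × ℝ) : ℝ :=
  W (q.1 * t) (q.2 * t) * (1 - W (q.1 * t) (q.2 * t))

section VarianceKernel

variable {W : ℝ → ℝ → ℝ} {t : ℝ}

lemma measurable_varianceKernel (hW : Measurable (Function.uncurry W)) :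
    Measurable (varianceKernel W t) := by
  have hWt : Measurable fun q : ℝ × ℝ => W (q.1 * t) (q.2 * t) :=
    hW.comp ((measurable_fst.mul_const t).prodMk (measurable_snd.mul_const t))
  exact hWt.mul (measurable_const.sub hWt)

lemma varianceKernel_mem_Icc (hW01 : ∀ a b, 0 ≤ a → 0 ≤ b → W a b ∈ Icc (0 : ℝ) 1)
    (ht : 0 ≤ t) {q : ℝ × ℝ} (hq : q ∈ Icc (0 : ℝ) 1 ×ˢ Icc (0 : ℝ) 1) :
    varianceKernel W t q ∈ Icc (0 : ℝ) 1 := by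
  have hWq := hW01 (q.1 * t) (q.2 * t) (mul_nonneg hq.1.1 ht) (mul_nonneg hq.2.1 ht)
  unfold varianceKernel
  exact ⟨mul_nonneg hWq.1 (by linarith [hWq.2]), by nlinarith [hWq.1, hWq.2]⟩

lemma varianceKernel_diag (hW0 : ∀ a, 0 ≤ a → W a a = 0) (ht : 0 ≤ t) {x : ℝ} (hx : 0 ≤ x) :
    varianceKernel W t (x, x) = 0 := by
  simp [varianceKernel, hW0 _ (mul_nonneg hx ht)]

lemma setIntegral_varianceKernel (hW : Measurable (Function.uncurry W))
    (hW01 : ∀ a b, 0 ≤ a → 0 ≤ b → W a b ∈ Icc (0 : ℝ) 1) (ht : 0 < t) :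
    ∫ q in Icc (0 : ℝ) 1 ×ˢ Icc (0 : ℝ) 1, varianceKernel W t q = (L1 W t - L2sq W t) / t ^ 2 := by
  have : IsFiniteMeasure (volume.restrict (Icc (0 : ℝ) t ×ˢ Icc (0 : ℝ) t)) :=
    isFiniteMeasure_restrict.mpr (isCompact_Icc.prod isCompact_Icc).measure_lt_top.ne
  have hW01' : ∀ᵐ q ∂volume.restrict (Icc (0 : ℝ) t ×ˢ Icc (0 : ℝ) t), W q.1 q.2 ∈ Icc (0 : ℝ) 1 :=
    ae_restrict_of_forall_mem (measurableSet_Icc.prod measurableSet_Icc) fun q hq =>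
      hW01 _ _ hq.1.1 hq.2.1
  have hint : IntegrableOn (fun q : ℝ × ℝ => W q.1 q.2) (Icc 0 t ×ˢ Icc 0 t) :=
    Integrable.of_mem_Icc 0 1 hW.aemeasurable hW01'
  have hint_sq : IntegrableOn (fun q : ℝ × ℝ => W q.1 q.2 ^ 2) (Icc 0 t ×ˢ Icc 0 t) :=
    Integrable.of_mem_Icc 0 1 (hW.pow_const 2).aemeasurable
      (hW01'.mono fun q hq => ⟨by positivity, pow_le_one₀ hq.1 hq.2⟩)
  unfold varianceKernel
  rw [setIntegral_unitSquare_comp_mul ht fun q => W q.1 q.2 * (1 - W q.1 q.2), L1, L2sq,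
    ← integral_sub hint hint_sq]
  simp_rw [mul_one_sub, sq]

end VarianceKernel

theorem expected_edge_sampling_error_general {Ω₁ Ω₂ : Type*} [MeasurableSpace Ω₁] [MeasurableSpace Ω₂]
    (μ₁ : Measure Ω₁) (μ₂ : Measure Ω₂)
    [IsProbabilityMeasure μ₁] [IsProbabilityMeasure μ₂]
    (tN : ℝ) (htN : 0 < tN) (Wk : ℝ → ℝ → ℝ)
    (hWmeas : Measurable (Function.uncurry Wk))
    (hWrange : ∀ a b, 0 ≤ a → 0 ≤ b → Wk a b ∈ Set.Icc (0 : ℝ) 1)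
    (hWdiag : ∀ a, 0 ≤ a → Wk a a = 0)
    (N : ℕ)
    (v : Fin N → Ω₁ → ℝ) (hiid : IIDUniform v μ₁)
    (u : Ω₁ → Fin N → ℝ) (hord : SortedVersion u v)
    (e : Fin N → Fin N → Ω₁ → Ω₂ → ℝ)
    (he : CondBernoulliAdj μ₂ e (fun a b => Wk (a * tN) (b * tN)) u) :
    (∫ ω₁, ∫ ω₂, kl2 (fun s t =>
        interp2 N (fun i j => e i j ω₁ ω₂) s t
          - interp2 N (fun i j => Wk (u ω₁ i * tN) (u ω₁ j * tN)) s t) ∂μ₂ ∂μ₁)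
      ≤ Real.sqrt (L1 Wk tN - L2sq Wk tN) / tN := by
  set G := varianceKernel Wk tN
  have hG01 : ∀ q ∈ Icc (0 : ℝ) 1 ×ˢ Icc (0 : ℝ) 1, G q ∈ Icc (0 : ℝ) 1 := fun q hq =>
    varianceKernel_mem_Icc hWrange htN.le hq
  have hGm : Measurable G := measurable_varianceKernel hWmeas
  set S : Ω₁ → ℝ := fun ω => (∑ i, ∑ j, G (v i ω, v j ω)) / N ^ 2
  have hSm : Measurable S := hiid.measurable_sum_sum_div hGm
  have hS01 : ∀ᵐ ω ∂μ₁, S ω ∈ Icc (0 : ℝ) 1 := hiid.ae_sum_sum_div_mem_Icc hG01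
  calc _ ≤ ∫ ω₁, √(S ω₁) ∂μ₁ := by
        refine integral_mono_of_nonneg
          (ae_of_all _ fun ω₁ => integral_nonneg fun ω₂ => Real.sqrt_nonneg _)
          (Integrable.of_mem_Icc 0 1 hSm.sqrt.aemeasurable
            (hS01.mono fun ω h => ⟨Real.sqrt_nonneg _, Real.sqrt_le_one.mpr h.2⟩))
          (ae_of_all _ fun ω₁ => ?_)
        refine (integral_kl2_interp2_sub_le (p := fun i j => Wk (u ω₁ i * tN) (u ω₁ j * tN))
          (fun i j => (he.1 i j ω₁).aemeasurable) (he.2.2.2 · · ω₁)).trans_eq ?_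
        exact congrArg (fun x => √(x / N ^ 2)) (hord.sum_sum_comp (fun a b => G (a, b)) ω₁)
    _ ≤ √(∫ ω₁, S ω₁ ∂μ₁) :=
        integral_sqrt_le_sqrt_integral (hS01.mono fun _ h => h.1)
          (Integrable.of_mem_Icc 0 1 hSm.aemeasurable hS01)
    _ ≤ √(∫ q in Icc (0 : ℝ) 1 ×ˢ Icc (0 : ℝ) 1, G q) :=
        Real.sqrt_le_sqrt (hiid.integral_sum_sum_div_le hGm hG01
          fun x hx => varianceKernel_diag hWdiag htN.le hx.1)
    _ = √(L1 Wk tN - L2sq Wk tN) / tN := by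
        rw [setIntegral_varianceKernel hWmeas hWrange htN,
          Real.sqrt_div' _ (by positivity), Real.sqrt_sq htN.le]

/-- `E‖W̄_N − P̄_N‖ ≤ √(L₁ − L₂²)/t_N` for Bernoulli edges sampled
(conditionally independently) from a sparse random graph model with zero diagonal. -/
theorem expected_edge_sampling_error {Ω₁ Ω₂ : Type*} [MeasurableSpace Ω₁] [MeasurableSpace Ω₂]
    (μ₁ : Measure Ω₁) (μ₂ : Measure Ω₂)
    [IsProbabilityMeasure μ₁] [IsProbabilityMeasure μ₂]
    (tN : ℝ) (htN : 0 < tN) (Wk : ℝ → ℝ → ℝ)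
    (hWmeas : Measurable (Function.uncurry Wk))
    (hWsym : ∀ a b, Wk a b = Wk b a)
    (hWrange : ∀ a b, 0 ≤ a → 0 ≤ b → Wk a b ∈ Set.Icc (0 : ℝ) 1)
    (hWdiag : ∀ a, 0 ≤ a → Wk a a = 0)
    (N : ℕ) (hN : 0 < N)
    (v : Fin N → Ω₁ → ℝ) (hiid : IIDUniform v μ₁)
    (u : Ω₁ → Fin N → ℝ) (hord : SortedVersion u v)
    (e : Fin N → Fin N → Ω₁ → Ω₂ → ℝ)
    (he : CondBernoulliAdj μ₂ e (fun a b => Wk (a * tN) (b * tN)) u) :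
    (∫ ω₁, ∫ ω₂, kl2 (fun s t =>
        interp2 N (fun i j => e i j ω₁ ω₂) s t
          - interp2 N (fun i j => Wk (u ω₁ i * tN) (u ω₁ j * tN)) s t) ∂μ₂ ∂μ₁)
      ≤ Real.sqrt (L1 Wk tN - L2sq Wk tN) / tN :=
  expected_edge_sampling_error_general μ₁ μ₂ tN htN Wk hWmeas hWrange hWdiag N v hiid u hord e he

end
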